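/- Soundness of the loop convergence axiom C: let Δ be an inductively expressive dynamic theory, let v, w ∈ V_ℕ be distinct integer-expressive variables, let p ∈ P^reg be a program of the regular closure Δ^reg, and let φ be a formula of Δ^reg such that w ∉ FV^sem(φ) and v, w ∉ FV^sem(p) ∪ BV^sem(p). Then the formula [p*](∀v (nat_{>0}(v) → ⟨p⟩(∀w (nat_{+1}(w,v) → ∀v (nat_=(v,w) → φ))))) → (∀v (φ → ⟨p*⟩(∃v (¬nat_{>0}(v) ∧ φ)))) is Δ^reg-valid. -/
import Mathlib


/-- A dynamic theory over variables `V`, first-order atoms `A`, programs `P`,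
state space `S` and universe `U`. -/
structure DynamicTheory (V : Type*) (A : Type*) (P : Type*) (S : Type*) (U : Type*) where
  state_nonempty : Nonempty S
  univ_nonempty : Nonempty U
  /-- variable evaluation -/
  val : S → V → U
  /-- interpolation property of the state space -/
  interpolation : ∀ (μ ν : S) (W : Set V), ∃ ω : S,
    (∀ v ∈ W, val ω v = val μ v) ∧ (∀ v ∉ W, val ω v = val ν v)
  /-- atom evaluation -/
  atomEval : A → Set S
  /-- free-variable overapproximation for atoms -/
  fvA : A → Set V
  fvA_finite : ∀ a : A, (fvA a).Finite
  fvA_overapprox : ∀ (a : A) (μ ν : S),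
    (∀ v ∈ fvA a, val μ v = val ν v) → (μ ∈ atomEval a ↔ ν ∈ atomEval a)
  /-- program evaluation -/
  progEval : P → Set (S × S)
  /-- free-variable overapproximation for programs -/
  fvP : P → Set V
  fvP_finite : ∀ p : P, (fvP p).Finite
  progEval_ext : ∀ (p : P) (μ ν ω : S),
    (∀ v : V, val μ v = val ν v) → ((μ, ω) ∈ progEval p ↔ (ν, ω) ∈ progEval p)
  fvP_overapprox : ∀ (p : P) (W : Set V), fvP p ⊆ W →
    ∀ (μ ν ω : S), (∀ v ∈ W, val μ v = val ν v) → (μ, ω) ∈ progEval p →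
      ∃ ω' : S, (ν, ω') ∈ progEval p ∧ ∀ v ∈ W, val ω v = val ω' v

/-- Λ-formulas over variables `V`, atoms `A` and programs `P`. -/
inductive Formula (V : Type*) (A : Type*) (P : Type*) where
  | atom : A → Formula V A P
  | not : Formula V A P → Formula V A P
  | and : Formula V A P → Formula V A P → Formula V A P
  | all : V → Formula V A P → Formula V A P
  | box : P → Formula V A P → Formula V A P

namespace Formula

/-- Semantics of Λ-formulas. -/
def sem {V A P S U : Type*} (val : S → V → U) (aEval : A → Set S)
    (pEval : P → Set (S × S)) : Formula V A P → Set S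
  | atom a => aEval a
  | not F => (sem val aEval pEval F)ᶜ
  | and F G => sem val aEval pEval F ∩ sem val aEval pEval G
  | all v F => {μ : S | ∀ ν : S, (∀ w : V, w ≠ v → val μ w = val ν w) →
      ν ∈ sem val aEval pEval F}
  | box p F => {μ : S | ∀ ν : S, (μ, ν) ∈ pEval p → ν ∈ sem val aEval pEval F}

/-- Implication as the usual abbreviation. -/
def imp {V A P : Type*} (F G : Formula V A P) : Formula V A P := not (and F (not G))

/-- Bi-implication as the usual abbreviation. -/
def iff {V A P : Type*} (F G : Formula V A P) : Formula V A P := and (imp F G) (imp G F)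

/-- The diamond modality `⟨p⟩F = ¬[p]¬F`. -/
def dia {V A P : Type*} (p : P) (F : Formula V A P) : Formula V A P := not (box p (not F))

/-- Existential quantification `∃v F = ¬∀v ¬F`. -/
def exi {V A P : Type*} (v : V) (F : Formula V A P) : Formula V A P := not (all v (not F))

/-- Mapping a formula along renamings of variables, atoms and programs. -/
def map {V A P V' A' P' : Type*} (fv : V → V') (fa : A → A') (fp : P → P') :
    Formula V A P → Formula V' A' P'
  | atom a => atom (fa a)
  | not F => not (map fv fa fp F)
  | and F G => and (map fv fa fp F) (map fv fa fp G)
  | all v F => all (fv v) (map fv fa fp F)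
  | box p F => box (fp p) (map fv fa fp F)

end Formula

/-- Validity: the formula holds in every state. -/
def Valid {V A P S U : Type*} (val : S → V → U) (aEval : A → Set S)
    (pEval : P → Set (S × S)) (F : Formula V A P) : Prop :=
  Formula.sem val aEval pEval F = Set.univ

/-- Semantically free variables of a formula. -/
def fvSemFml {V A P S U : Type*} (val : S → V → U) (aEval : A → Set S)
    (pEval : P → Set (S × S)) (F : Formula V A P) : Set V :=
  {v : V | ∃ μ μ' : S, (∀ w : V, w ≠ v → val μ w = val μ' w) ∧
      μ ∈ Formula.sem val aEval pEval F ∧ μ' ∉ Formula.sem val aEval pEval F}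

/-- Semantically free variables of a program. -/
def fvSemProg {V P S U : Type*} (val : S → V → U) (pEval : P → Set (S × S)) (p : P) : Set V :=
  {v : V | ∃ μ μ' ν : S, (∀ w : V, w ≠ v → val μ w = val μ' w) ∧ (μ, ν) ∈ pEval p ∧
      ¬ ∃ ν' : S, (∀ w : V, w ≠ v → val ν w = val ν' w) ∧ (μ', ν') ∈ pEval p}

/-- Semantically bound variables of a program. -/
def bvSemProg {V P S U : Type*} (val : S → V → U) (pEval : P → Set (S × S)) (p : P) : Set V :=
  {v : V | ∃ μ μ' : S, (μ, μ') ∈ pEval p ∧ val μ v ≠ val μ' v}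

/-- Syntactic free variables of a formula. -/
def fvSyn {V A P : Type*} (fvA : A → Set V) (fvP : P → Set V) : Formula V A P → Set V
  | .atom a => fvA a
  | .not F => fvSyn fvA fvP F
  | .and F G => fvSyn fvA fvP F ∪ fvSyn fvA fvP G
  | .all v F => fvSyn fvA fvP F \ {v}
  | .box p F => fvP p ∪ fvSyn fvA fvP F

/-- First-order (modality-free) formulas are formulas whose programs are drawn from
`Empty`; this is their semantics. -/
def foSem {V A S U : Type*} (val : S → V → U) (aEval : A → Set S)
    (F : Formula V A Empty) : Set S :=
  Formula.sem val aEval (fun e => e.elim) F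

/-- Embedding of first-order formulas into formulas over any program set. -/
def embFO {V A P : Type*} (F : Formula V A Empty) : Formula V A P :=
  Formula.map id id (fun e => e.elim) F

/-- Program evaluation of the havoc lift: original programs keep their behaviour and
`v := *` (encoded as `Sum.inr v`) relates states that agree outside `v`. -/
def havocProgEval {V P S U : Type*} (val : S → V → U) (pEval : P → Set (S × S)) :
    P ⊕ V → Set (S × S)
  | Sum.inl p => pEval p
  | Sum.inr v => {x : S × S | ∀ w : V, w ≠ v → val x.1 w = val x.2 w}

/-- Free-variable overapproximation of the havoc lift. -/
def havocFvP {V P : Type*} (fvP : P → Set V) : P ⊕ V → Set V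
  | Sum.inl p => fvP p
  | Sum.inr _ => ∅

/-- Regular programs over base programs `P`, with tests on first-order formulas. -/
inductive RegProg (V : Type*) (A : Type*) (P : Type*) where
  | base : P → RegProg V A P
  | seq : RegProg V A P → RegProg V A P → RegProg V A P
  | choice : RegProg V A P → RegProg V A P → RegProg V A P
  | test : Formula V A Empty → RegProg V A P
  | star : RegProg V A P → RegProg V A P

/-- Relational composition. -/
def relComp {S : Type*} (R Q : Set (S × S)) : Set (S × S) :=
  {x : S × S | ∃ ν : S, (x.1, ν) ∈ R ∧ (ν, x.2) ∈ Q}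

/-- `n`-fold iteration of a relation, starting from the identity up to variable values. -/
def relIter {V S U : Type*} (val : S → V → U) (R : Set (S × S)) : ℕ → Set (S × S)
  | 0 => {x : S × S | ∀ v : V, val x.1 v = val x.2 v}
  | n + 1 => relComp R (relIter val R n)

/-- Program evaluation of the regular closure. -/
def regProgEval {V A P S U : Type*} (val : S → V → U) (aEval : A → Set S)
    (pEval : P → Set (S × S)) : RegProg V A P → Set (S × S)
  | .base r => pEval r
  | .seq p q => relComp (regProgEval val aEval pEval p) (regProgEval val aEval pEval q)
  | .choice p q => regProgEval val aEval pEval p ∪ regProgEval val aEval pEval q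
  | .test F => {x : S × S | x.1 ∈ foSem val aEval F ∧ ∀ v : V, val x.1 v = val x.2 v}
  | .star p => ⋃ n : ℕ, relIter val (regProgEval val aEval pEval p) n

/-- Free-variable overapproximation of the regular closure. -/
def regFvP {V A P : Type*} (fvA : A → Set V) (fvP : P → Set V) : RegProg V A P → Set V
  | .base r => fvP r
  | .seq p q => regFvP fvA fvP p ∪ regFvP fvA fvP q
  | .choice p q => regFvP fvA fvP p ∪ regFvP fvA fvP q
  | .test F => fvSyn fvA (fun e => e.elim) F
  | .star p => regFvP fvA fvP p

/-- Bound-variable overapproximation of the regular closure. -/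
def regBvP {V A P : Type*} (bvP : P → Set V) : RegProg V A P → Set V
  | .base r => bvP r
  | .seq p q => regBvP bvP p ∪ regBvP bvP q
  | .choice p q => regBvP bvP p ∪ regBvP bvP q
  | .test _ => ∅
  | .star p => regBvP bvP p

/-- The set of values a variable can take. -/
def valueSet {V S U : Type*} (val : S → V → U) (v : V) : Set U :=
  {δ : U | ∃ μ : S, val μ v = δ}

/-- Twin variables: variables with the same value set. -/
def TwinVars {V S U : Type*} (val : S → V → U) (v w : V) : Prop :=
  valueSet val v = valueSet val w

/-- Twin variable vectors: componentwise twins of equal length. -/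
def TwinLists {V S U : Type*} (val : S → V → U) (x xp : List V) : Prop :=
  x.length = xp.length ∧ ∀ q ∈ x.zip xp, TwinVars val q.1 q.2

/-- FOL expressiveness relative to a chosen equality predicate `eq`: infinitely many twin
variables, soundness of the equality predicate on twins, and first-order renditions of all
programs (stated semantically: the rendition is valid-equivalent to `⟨p⟩(x ≐ x⁺)`). -/
def FOLExpressive {V A P S U : Type*} (val : S → V → U) (aEval : A → Set S)
    (pEval : P → Set (S × S)) (eq : V → V → Formula V A Empty) : Prop :=
  (∀ v : V, {w : V | TwinVars val v w}.Infinite) ∧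
  (∀ v w : V, TwinVars val v w →
    ∀ μ : S, μ ∈ foSem val aEval (eq v w) ↔ val μ v = val μ w) ∧
  (∀ (p : P) (x xp : List V), TwinLists val x xp → x.Nodup → xp.Nodup →
    fvSemProg val pEval p ∪ bvSemProg val pEval p ⊆ {v : V | v ∈ x} →
    (∀ v ∈ x, v ∉ xp) →
    ∃ Sp : Formula V A Empty, ∀ μ : S,
      μ ∈ foSem val aEval Sp ↔
        ∃ ν : S, (μ, ν) ∈ pEval p ∧ ∀ q ∈ x.zip xp, val ν q.1 = val ν q.2)

/-- Variable evaluation of the heterogeneous (product) state space. -/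
def hetVal {V0 V1 S0 S1 U0 U1 : Type*} (val0 : S0 → V0 → U0) (val1 : S1 → V1 → U1) :
    S0 × S1 → V0 ⊕ V1 → U0 ⊕ U1 := fun μ v =>
  match v with
  | Sum.inl v => Sum.inl (val0 μ.1 v)
  | Sum.inr v => Sum.inr (val1 μ.2 v)

/-- Atom evaluation of the simple heterogeneous theory. -/
def hetAtomEval {A0 A1 Ac S0 S1 : Type*} (aEval0 : A0 → Set S0) (aEval1 : A1 → Set S1)
    (aEvalC : Ac → Set (S0 × S1)) : A0 ⊕ A1 ⊕ Ac → Set (S0 × S1) := fun a =>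
  match a with
  | Sum.inl a => {μ : S0 × S1 | μ.1 ∈ aEval0 a}
  | Sum.inr (Sum.inl a) => {μ : S0 × S1 | μ.2 ∈ aEval1 a}
  | Sum.inr (Sum.inr a) => aEvalC a

/-- Free variables of atoms of the simple heterogeneous theory. -/
def hetFvA {V0 V1 A0 A1 Ac : Type*} (fvA0 : A0 → Set V0) (fvA1 : A1 → Set V1)
    (fvAC : Ac → Set (V0 ⊕ V1)) : A0 ⊕ A1 ⊕ Ac → Set (V0 ⊕ V1) := fun a =>
  match a with
  | Sum.inl a => Sum.inl '' fvA0 a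
  | Sum.inr (Sum.inl a) => Sum.inr '' fvA1 a
  | Sum.inr (Sum.inr a) => fvAC a

/-- Program evaluation of the simple heterogeneous theory: a program of one component acts
on its component while the other component keeps all its variable values. -/
def hetProgEval {V0 V1 P0 P1 S0 S1 U0 U1 : Type*} (val0 : S0 → V0 → U0)
    (val1 : S1 → V1 → U1) (pEval0 : P0 → Set (S0 × S0)) (pEval1 : P1 → Set (S1 × S1)) :
    P0 ⊕ P1 → Set ((S0 × S1) × (S0 × S1)) := fun p =>
  match p with
  | Sum.inl p => {x | (x.1.1, x.2.1) ∈ pEval0 p ∧ ∀ v : V1, val1 x.1.2 v = val1 x.2.2 v}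
  | Sum.inr p => {x | (x.1.2, x.2.2) ∈ pEval1 p ∧ ∀ v : V0, val0 x.1.1 v = val0 x.2.1 v}

/-- Free variables of programs of the simple heterogeneous theory. -/
def hetFvP {V0 V1 P0 P1 : Type*} (fvP0 : P0 → Set V0) (fvP1 : P1 → Set V1) :
    P0 ⊕ P1 → Set (V0 ⊕ V1) := fun p =>
  match p with
  | Sum.inl p => Sum.inl '' fvP0 p
  | Sum.inr p => Sum.inr '' fvP1 p

section ConvergenceHelpers

variable {V A P S U : Type*}

theorem mem_sem_imp {val : S → V → U} {aE : A → Set S} {pE : P → Set (S × S)}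
    {F G : Formula V A P} {μ : S} :
    μ ∈ Formula.sem val aE pE (F.imp G) ↔
      (μ ∈ Formula.sem val aE pE F → μ ∈ Formula.sem val aE pE G) := by
  simp only [Formula.imp, Formula.sem, Set.mem_compl_iff, Set.mem_inter_iff]
  tauto

theorem mem_sem_dia {val : S → V → U} {aE : A → Set S} {pE : P → Set (S × S)}
    {q : P} {F : Formula V A P} {μ : S} :
    μ ∈ Formula.sem val aE pE (Formula.dia q F) ↔
      ∃ ν : S, (μ, ν) ∈ pE q ∧ ν ∈ Formula.sem val aE pE F := by
  simp only [Formula.dia, Formula.sem, Set.mem_compl_iff, Set.mem_setOf_eq]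
  push_neg
  rfl

theorem mem_sem_exi {val : S → V → U} {aE : A → Set S} {pE : P → Set (S × S)}
    {x : V} {F : Formula V A P} {μ : S} :
    μ ∈ Formula.sem val aE pE (Formula.exi x F) ↔
      ∃ ν : S, (∀ y : V, y ≠ x → val μ y = val ν y) ∧ ν ∈ Formula.sem val aE pE F := by
  simp only [Formula.exi, Formula.sem, Set.mem_compl_iff, Set.mem_setOf_eq]
  push_neg
  rfl

theorem sem_embFO (val : S → V → U) (aE : A → Set S) (pE : P → Set (S × S)) :
    ∀ F : Formula V A Empty,
      Formula.sem val aE pE (embFO F) = foSem val aE F := by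
  intro F
  induction F with
  | atom a => rfl
  | not F ih =>
      show (Formula.sem val aE pE (embFO F))ᶜ = _
      rw [ih]; rfl
  | and F G ihF ihG =>
      show Formula.sem val aE pE (embFO F) ∩ Formula.sem val aE pE (embFO G) = _
      rw [ihF, ihG]; rfl
  | all x F ih =>
      show {μ : S | ∀ ν : S, (∀ y : V, y ≠ x → val μ y = val ν y) →
          ν ∈ Formula.sem val aE pE (embFO F)} = _
      rw [ih]; rfl
  | box q F ih => exact q.elim

theorem relIter_ext {val : S → V → U} {R : Set (S × S)}
    (hR : ∀ μ ν ω : S, (∀ x : V, val μ x = val ν x) → ((μ, ω) ∈ R ↔ (ν, ω) ∈ R)) :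
    ∀ (n : ℕ) (μ ν ω : S), (∀ x : V, val μ x = val ν x) →
      ((μ, ω) ∈ relIter val R n ↔ (ν, ω) ∈ relIter val R n) := by
  intro n
  induction n with
  | zero =>
      intro μ ν ω h
      constructor <;> intro h' x
      · exact (h x).symm.trans (h' x)
      · exact (h x).trans (h' x)
  | succ n ih =>
      intro μ ν ω h
      constructor <;> rintro ⟨κ, h1, h2⟩
      · exact ⟨κ, (hR μ ν κ h).mp h1, h2⟩
      · exact ⟨κ, (hR μ ν κ h).mpr h1, h2⟩

theorem relIter_append {val : S → V → U} {R : Set (S × S)}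
    (hR : ∀ μ ν ω : S, (∀ x : V, val μ x = val ν x) → ((μ, ω) ∈ R ↔ (ν, ω) ∈ R)) :
    ∀ (n : ℕ) (σ κ τ : S), (σ, κ) ∈ relIter val R n → (κ, τ) ∈ R →
      (σ, τ) ∈ relIter val R (n + 1) := by
  intro n
  induction n with
  | zero =>
      intro σ κ τ h hκτ
      exact ⟨τ, (hR κ σ τ (fun x => (h x).symm)).mp hκτ, fun x => rfl⟩
  | succ n ih =>
      rintro σ κ τ ⟨x, hx1, hx2⟩ hκτ
      exact ⟨x, hx1, ih x κ τ hx2 hκτ⟩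

theorem relIter_transfer {val : S → V → U} {R : Set (S × S)} {v w : V}
    (_hvw : v ≠ w)
    (interp : ∀ (μ ν : S) (W : Set V), ∃ ω : S,
      (∀ x ∈ W, val ω x = val μ x) ∧ (∀ x ∉ W, val ω x = val ν x))
    (hfvv : ∀ σ σ' κ : S, (∀ x : V, x ≠ v → val σ x = val σ' x) → (σ, κ) ∈ R →
      ∃ κ' : S, (∀ x : V, x ≠ v → val κ x = val κ' x) ∧ (σ', κ') ∈ R)
    (hfvw : ∀ σ σ' κ : S, (∀ x : V, x ≠ w → val σ x = val σ' x) → (σ, κ) ∈ R →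
      ∃ κ' : S, (∀ x : V, x ≠ w → val κ x = val κ' x) ∧ (σ', κ') ∈ R) :
    ∀ (n : ℕ) (σ σ' τ : S), (∀ x : V, x ≠ v → x ≠ w → val σ x = val σ' x) →
      (σ, τ) ∈ relIter val R n →
      ∃ τ' : S, (∀ x : V, x ≠ v → x ≠ w → val τ x = val τ' x) ∧
        (σ', τ') ∈ relIter val R n := by
  intro n
  induction n with
  | zero =>
      intro σ σ' τ hss h
      exact ⟨σ', fun x hxv hxw => (h x).symm.trans (hss x hxv hxw), fun x => rfl⟩
  | succ n ih =>
      rintro σ σ' τ hss ⟨κ, hσκ, hκτ⟩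
      obtain ⟨σ₁, hσ₁in, hσ₁out⟩ := interp σ σ' ({v} : Set V)
      have hσσ₁ : ∀ x : V, x ≠ w → val σ x = val σ₁ x := by
        intro x hxw
        by_cases hxv : x = v
        · exact (hσ₁in x (Set.mem_singleton_iff.mpr hxv)).symm
        · exact ((hσ₁out x hxv).trans (hss x hxv hxw).symm).symm
      obtain ⟨κ₁, hκκ₁, hσ₁κ₁⟩ := hfvw σ σ₁ κ hσσ₁ hσκ
      have hσ₁σ' : ∀ x : V, x ≠ v → val σ₁ x = val σ' x := fun x hxv =>
        hσ₁out x (fun h => hxv (Set.mem_singleton_iff.mp h))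
      obtain ⟨κ₂, hκ₁κ₂, hσ'κ₂⟩ := hfvv σ₁ σ' κ₁ hσ₁σ' hσ₁κ₁
      have hκκ₂ : ∀ x : V, x ≠ v → x ≠ w → val κ x = val κ₂ x := fun x hxv hxw =>
        (hκκ₁ x hxw).trans (hκ₁κ₂ x hxv)
      obtain ⟨τ', hττ', hκ₂τ'⟩ := ih κ κ₂ τ hκκ₂ hκτ
      exact ⟨τ', hττ', κ₂, hσ'κ₂, hκ₂τ'⟩

end ConvergenceHelpers

section RegExt

variable {V A P S U : Type*}

theorem foSem_ext {val : S → V → U} {aE : A → Set S}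
    (haE : ∀ (a : A) (μ ν : S), (∀ x : V, val μ x = val ν x) → (μ ∈ aE a ↔ ν ∈ aE a)) :
    ∀ (F : Formula V A Empty) (μ ν : S), (∀ x : V, val μ x = val ν x) →
      (μ ∈ foSem val aE F ↔ ν ∈ foSem val aE F) := by
  intro F
  induction F with
  | atom a => exact haE a
  | not F ih =>
      intro μ ν h
      exact not_congr (ih μ ν h)
  | and F G ihF ihG =>
      intro μ ν h
      exact and_congr (ihF μ ν h) (ihG μ ν h)
  | all x F _ =>
      intro μ ν h
      constructor <;> intro h' ρ hρ
      · exact h' ρ (fun y hy => (h y).trans (hρ y hy))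
      · exact h' ρ (fun y hy => (h y).symm.trans (hρ y hy))
  | box q F _ => exact q.elim

theorem regProgEval_ext (Δ : DynamicTheory V A P S U) :
    ∀ (q : RegProg V A P) (μ ν ω : S), (∀ x : V, Δ.val μ x = Δ.val ν x) →
      ((μ, ω) ∈ regProgEval Δ.val Δ.atomEval Δ.progEval q ↔
        (ν, ω) ∈ regProgEval Δ.val Δ.atomEval Δ.progEval q) := by
  intro q
  induction q with
  | base r => exact Δ.progEval_ext r
  | seq q1 q2 ih1 ih2 =>
      intro μ ν ω h
      constructor <;> rintro ⟨κ, h1, h2⟩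
      · exact ⟨κ, (ih1 μ ν κ h).mp h1, h2⟩
      · exact ⟨κ, (ih1 μ ν κ h).mpr h1, h2⟩
  | choice q1 q2 ih1 ih2 =>
      intro μ ν ω h
      exact or_congr (ih1 μ ν ω h) (ih2 μ ν ω h)
  | test F =>
      intro μ ν ω h
      have hF := foSem_ext (fun a μ' ν' h' =>
        Δ.fvA_overapprox a μ' ν' (fun x _ => h' x)) F μ ν h
      constructor <;> rintro ⟨h1, h2⟩
      · exact ⟨hF.mp h1, fun x => (h x).symm.trans (h2 x)⟩
      · exact ⟨hF.mpr h1, fun x => (h x).trans (h2 x)⟩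
  | star q ih =>
      intro μ ν ω h
      simp only [regProgEval, Set.mem_iUnion]
      exact exists_congr fun n => relIter_ext ih n μ ν ω h

end RegExt

/-- Soundness of the loop convergence axiom (C) for an inductively
expressive dynamic theory: for distinct integer-expressive variables `v, w` not occurring
in `p` (with `w` not free in `φ`), the convergence axiom
`[p*](∀v (nat>0(v) → ⟨p⟩(∀w (nat+1(w,v) → ∀v (nat=(v,w) → φ))))) →
 (∀v (φ → ⟨p*⟩(∃v (¬nat>0(v) ∧ φ))))` is valid in the regular closure. -/
theorem loop_convergence_axiom_sound
    {V A P S U : Type*} (Δ : DynamicTheory V A P S U)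
    (u2n : U → ℕ) (Vnat : Set V)
    (natPos : V → Formula V A Empty) (natEq natSucc : V → V → Formula V A Empty)
    (hExpressive : ∀ u ∈ Vnat, ∀ n : ℕ, ∃ μ : S, u2n (Δ.val μ u) = n)
    (hPos : ∀ u ∈ Vnat, ∀ μ : S,
      μ ∈ foSem Δ.val Δ.atomEval (natPos u) ↔ 0 < u2n (Δ.val μ u))
    (hEq : ∀ u ∈ Vnat, ∀ u' ∈ Vnat, u ≠ u' → ∀ μ : S,
      μ ∈ foSem Δ.val Δ.atomEval (natEq u u') ↔ u2n (Δ.val μ u) = u2n (Δ.val μ u'))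
    (hSucc : ∀ u ∈ Vnat, ∀ u' ∈ Vnat, u ≠ u' → ∀ μ : S,
      μ ∈ foSem Δ.val Δ.atomEval (natSucc u u') ↔
        u2n (Δ.val μ u) + 1 = u2n (Δ.val μ u'))
    (v w : V) (hv : v ∈ Vnat) (hw : w ∈ Vnat) (hvw : v ≠ w)
    (p : RegProg V A P) (φ : Formula V A (RegProg V A P))
    (hwφ : w ∉ fvSemFml Δ.val Δ.atomEval (regProgEval Δ.val Δ.atomEval Δ.progEval) φ)
    (hvp : v ∉ fvSemProg Δ.val (regProgEval Δ.val Δ.atomEval Δ.progEval) p ∪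
      bvSemProg Δ.val (regProgEval Δ.val Δ.atomEval Δ.progEval) p)
    (hwp : w ∉ fvSemProg Δ.val (regProgEval Δ.val Δ.atomEval Δ.progEval) p ∪
      bvSemProg Δ.val (regProgEval Δ.val Δ.atomEval Δ.progEval) p) :
    Valid Δ.val Δ.atomEval (regProgEval Δ.val Δ.atomEval Δ.progEval)
      (Formula.imp
        (Formula.box (RegProg.star p)
          (Formula.all v (Formula.imp (embFO (natPos v))
            (Formula.dia p
              (Formula.all w (Formula.imp (embFO (natSucc w v))
                (Formula.all v (Formula.imp (embFO (natEq v w)) φ))))))))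
        (Formula.all v (Formula.imp φ
          (Formula.dia (RegProg.star p)
            (Formula.exi v
              (Formula.and (Formula.not (embFO (natPos v))) φ)))))) := by
  -- Abbreviations via local facts extracted from the hypotheses.
  have hRext : ∀ μ' ν' ω' : S, (∀ x : V, Δ.val μ' x = Δ.val ν' x) →
      ((μ', ω') ∈ regProgEval Δ.val Δ.atomEval Δ.progEval p ↔
        (ν', ω') ∈ regProgEval Δ.val Δ.atomEval Δ.progEval p) :=
    regProgEval_ext Δ p
  have hvfv : ∀ σ σ' κ : S, (∀ x : V, x ≠ v → Δ.val σ x = Δ.val σ' x) →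
      (σ, κ) ∈ regProgEval Δ.val Δ.atomEval Δ.progEval p →
      ∃ κ' : S, (∀ x : V, x ≠ v → Δ.val κ x = Δ.val κ' x) ∧
        (σ', κ') ∈ regProgEval Δ.val Δ.atomEval Δ.progEval p := by
    intro σ σ' κ h1 h2
    by_contra hno
    push_neg at hno
    refine hvp (Set.mem_union_left _ ⟨σ, σ', κ, h1, h2, ?_⟩)
    rintro ⟨κ', ha, hb⟩
    exact hno κ' ha hb
  have hwfv : ∀ σ σ' κ : S, (∀ x : V, x ≠ w → Δ.val σ x = Δ.val σ' x) →
      (σ, κ) ∈ regProgEval Δ.val Δ.atomEval Δ.progEval p →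
      ∃ κ' : S, (∀ x : V, x ≠ w → Δ.val κ x = Δ.val κ' x) ∧
        (σ', κ') ∈ regProgEval Δ.val Δ.atomEval Δ.progEval p := by
    intro σ σ' κ h1 h2
    by_contra hno
    push_neg at hno
    refine hwp (Set.mem_union_left _ ⟨σ, σ', κ, h1, h2, ?_⟩)
    rintro ⟨κ', ha, hb⟩
    exact hno κ' ha hb
  have hvbv : ∀ σ κ : S, (σ, κ) ∈ regProgEval Δ.val Δ.atomEval Δ.progEval p →
      Δ.val σ v = Δ.val κ v := by
    intro σ κ h
    by_contra hne
    exact hvp (Set.mem_union_right _ ⟨σ, κ, h, hne⟩)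
  have hφstep : ∀ σ σ' : S, (∀ x : V, x ≠ w → Δ.val σ x = Δ.val σ' x) →
      σ ∈ Formula.sem Δ.val Δ.atomEval (regProgEval Δ.val Δ.atomEval Δ.progEval) φ →
      σ' ∈ Formula.sem Δ.val Δ.atomEval (regProgEval Δ.val Δ.atomEval Δ.progEval) φ := by
    intro σ σ' h hσ
    by_contra h'
    exact hwφ ⟨σ, σ', h, hσ, h'⟩
  unfold Valid
  ext μ
  simp only [Set.mem_univ, iff_true]
  rw [mem_sem_imp]
  intro hbox
  intro ν hμν
  rw [mem_sem_imp]
  intro hνφ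
  rw [mem_sem_dia]
  -- Main claim by induction on the value of `v`.
  have main : ∀ (n : ℕ) (ρ ω : S),
      (∀ x : V, x ≠ v → x ≠ w → Δ.val ρ x = Δ.val ω x) →
      (∃ k : ℕ, (μ, ω) ∈ relIter Δ.val (regProgEval Δ.val Δ.atomEval Δ.progEval p) k) →
      u2n (Δ.val ρ v) = n →
      ρ ∈ Formula.sem Δ.val Δ.atomEval (regProgEval Δ.val Δ.atomEval Δ.progEval) φ →
      ∃ (m : ℕ) (τ : S),
        (ρ, τ) ∈ relIter Δ.val (regProgEval Δ.val Δ.atomEval Δ.progEval p) m ∧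
        τ ∈ Formula.sem Δ.val Δ.atomEval (regProgEval Δ.val Δ.atomEval Δ.progEval)
          (Formula.exi v (Formula.and (Formula.not (embFO (natPos v))) φ)) := by
    intro n
    induction n with
    | zero =>
        intro ρ ω hρω hreach h0 hφρ
        refine ⟨0, ρ, fun x => rfl, ?_⟩
        rw [mem_sem_exi]
        refine ⟨ρ, fun y _ => rfl, ?_, hφρ⟩
        show ρ ∉ Formula.sem Δ.val Δ.atomEval
          (regProgEval Δ.val Δ.atomEval Δ.progEval) (embFO (natPos v))
        rw [sem_embFO, hPos v hv ρ]
        omega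
    | succ n ih =>
        rintro ρ ω hρω ⟨k, hreach⟩ hn hφρ
        have hboxω := hbox ω (Set.mem_iUnion.mpr ⟨k, hreach⟩)
        -- ρ' agrees with ρ except that `w` takes its value from ω
        obtain ⟨ρ', hρ'w, hρ'o⟩ := Δ.interpolation ω ρ ({w} : Set V)
        have hρρ' : ∀ x : V, x ≠ w → Δ.val ρ x = Δ.val ρ' x := fun x hx =>
          (hρ'o x (fun h => hx (Set.mem_singleton_iff.mp h))).symm
        have hρ'v : Δ.val ρ' v = Δ.val ρ v := hρ'o v (fun h => hvw (Set.mem_singleton_iff.mp h))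
        have hωρ' : ∀ x : V, x ≠ v → Δ.val ω x = Δ.val ρ' x := by
          intro x hxv
          by_cases hxw : x = w
          · subst hxw
            exact (hρ'w x rfl).symm
          · exact ((hρ'o x (fun h => hxw (Set.mem_singleton_iff.mp h))).trans
              (hρω x hxv hxw)).symm
        have himp := hboxω ρ' hωρ'
        have hρ'pos : ρ' ∈ Formula.sem Δ.val Δ.atomEval
            (regProgEval Δ.val Δ.atomEval Δ.progEval) (embFO (natPos v)) := by
          rw [sem_embFO, hPos v hv ρ', hρ'v, hn]
          omega
        obtain ⟨ω'', hρ'ω'', hω''all⟩ := mem_sem_dia.mp (mem_sem_imp.mp himp hρ'pos)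
        have hω''v : Δ.val ω'' v = Δ.val ρ v := (hvbv ρ' ω'' hρ'ω'').symm.trans hρ'v
        -- ρ₂ sets `w` to a value with counter n
        obtain ⟨τ₀, hτ₀⟩ := hExpressive w hw n
        obtain ⟨ρ₂, hρ₂w, hρ₂o⟩ := Δ.interpolation τ₀ ω'' ({w} : Set V)
        have hω''ρ₂ : ∀ x : V, x ≠ w → Δ.val ω'' x = Δ.val ρ₂ x := fun x hx =>
          (hρ₂o x (fun h => hx (Set.mem_singleton_iff.mp h))).symm
        have hρ₂v : Δ.val ρ₂ v = Δ.val ρ v :=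
          (hρ₂o v (fun h => hvw (Set.mem_singleton_iff.mp h))).trans hω''v
        have himp2 := hω''all ρ₂ hω''ρ₂
        have hρ₂succ : ρ₂ ∈ Formula.sem Δ.val Δ.atomEval
            (regProgEval Δ.val Δ.atomEval Δ.progEval) (embFO (natSucc w v)) := by
          rw [sem_embFO, hSucc w hw v hv (Ne.symm hvw) ρ₂, hρ₂w w rfl, hτ₀, hρ₂v, hn]
        have hall2 := mem_sem_imp.mp himp2 hρ₂succ
        -- ρ₃ sets `v` to a value with counter n
        obtain ⟨τ₁, hτ₁⟩ := hExpressive v hv n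
        obtain ⟨ρ₃, hρ₃v, hρ₃o⟩ := Δ.interpolation τ₁ ρ₂ ({v} : Set V)
        have hρ₂ρ₃ : ∀ x : V, x ≠ v → Δ.val ρ₂ x = Δ.val ρ₃ x := fun x hx =>
          (hρ₃o x (fun h => hx (Set.mem_singleton_iff.mp h))).symm
        have himp3 := hall2 ρ₃ hρ₂ρ₃
        have hρ₃vval : u2n (Δ.val ρ₃ v) = n := by rw [hρ₃v v rfl, hτ₁]
        have hρ₃eq : ρ₃ ∈ Formula.sem Δ.val Δ.atomEval
            (regProgEval Δ.val Δ.atomEval Δ.progEval) (embFO (natEq v w)) := by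
          rw [sem_embFO, hEq v hv w hw hvw ρ₃, hρ₃vval,
            ← hρ₂ρ₃ w (Ne.symm hvw), hρ₂w w rfl, hτ₀]
        have hρ₃φ := mem_sem_imp.mp himp3 hρ₃eq
        -- extend the reachability witness by one p-step
        obtain ⟨ν', hω''ν', hων'⟩ := hvfv ρ' ω ω'' (fun x hx => (hωρ' x hx).symm) hρ'ω''
        have hreach2 : (μ, ν') ∈
            relIter Δ.val (regProgEval Δ.val Δ.atomEval Δ.progEval p) (k + 1) :=
          relIter_append hRext k μ ω ν' hreach hων'
        have hρ₃ν' : ∀ x : V, x ≠ v → x ≠ w → Δ.val ρ₃ x = Δ.val ν' x := by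
          intro x hxv hxw
          exact ((hρ₃o x (fun h => hxv (Set.mem_singleton_iff.mp h))).trans
            (hρ₂o x (fun h => hxw (Set.mem_singleton_iff.mp h)))).trans (hω''ν' x hxv)
        obtain ⟨m, τ, hτiter, hτgoal⟩ := ih ρ₃ ν' hρ₃ν' ⟨k + 1, hreach2⟩ hρ₃vval hρ₃φ
        -- transfer the p-step and the remaining run back to ρ
        obtain ⟨ω₂, hω''ω₂, hρω₂⟩ := hwfv ρ' ρ ω'' (fun x hx => (hρρ' x hx).symm) hρ'ω''
        have hρ₃ω₂ : ∀ x : V, x ≠ v → x ≠ w → Δ.val ρ₃ x = Δ.val ω₂ x := by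
          intro x hxv hxw
          exact ((hρ₃o x (fun h => hxv (Set.mem_singleton_iff.mp h))).trans
            (hρ₂o x (fun h => hxw (Set.mem_singleton_iff.mp h)))).trans (hω''ω₂ x hxw)
        obtain ⟨τ', hττ', hω₂τ'⟩ :=
          relIter_transfer hvw Δ.interpolation hvfv hwfv m ρ₃ ω₂ τ hρ₃ω₂ hτiter
        -- adjust the witness state of the postcondition
        obtain ⟨κ, hτκ, hκand⟩ := mem_sem_exi.mp hτgoal
        obtain ⟨κ', hκ'v, hκ'o⟩ := Δ.interpolation κ τ' ({v} : Set V)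
        have hτ'κ' : ∀ y : V, y ≠ v → Δ.val τ' y = Δ.val κ' y := fun y hy =>
          (hκ'o y (fun h => hy (Set.mem_singleton_iff.mp h))).symm
        have hκκ' : ∀ x : V, x ≠ w → Δ.val κ x = Δ.val κ' x := by
          intro x hxw
          by_cases hxv : x = v
          · subst hxv
            exact (hκ'v x rfl).symm
          · exact ((hτκ x hxv).symm.trans (hττ' x hxv hxw)).trans (hτ'κ' x hxv)
        have hκ'φ := hφstep κ κ' hκκ' hκand.2
        have hκpos : κ ∉ Formula.sem Δ.val Δ.atomEval
            (regProgEval Δ.val Δ.atomEval Δ.progEval) (embFO (natPos v)) := hκand.1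
        rw [sem_embFO, hPos v hv κ] at hκpos
        have hκ'pos : κ' ∉ Formula.sem Δ.val Δ.atomEval
            (regProgEval Δ.val Δ.atomEval Δ.progEval) (embFO (natPos v)) := by
          rw [sem_embFO, hPos v hv κ', hκ'v v rfl]
          exact hκpos
        exact ⟨m + 1, τ', ⟨ω₂, hρω₂, hω₂τ'⟩,
          mem_sem_exi.mpr ⟨κ', hτ'κ', hκ'pos, hκ'φ⟩⟩
  obtain ⟨m, τ, hiter, hgoal⟩ := main (u2n (Δ.val ν v)) ν μ
    (fun x hxv _ => (hμν x hxv).symm) ⟨0, fun x => rfl⟩ rfl hνφ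
  exact ⟨τ, Set.mem_iUnion.mpr ⟨m, hiter⟩, hgoal⟩
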